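/- Let X = {P_1,...,P_r} ⊂ P^n_k be distinct points with x_n(P_i) = 1 for all i, dual linear forms L_i, socle degree s, and F_t = (1/(t+s−1)!) Σ_{i=1}^r α_i L_i^{t+s−1} with α_i ∈ k^*. Then x_n ∘ F_t = F_{t−1} for all t > 1, and x_n ∘ F_1 = 0 if and only if Σ_{i=1}^r α_i L_i^{s−1} = 0. Moreover, if Σ_{i=1}^r α_i L_i^{s−1} = 0 then HF_X(s−1) < r. -/

import Mathlib

open MvPolynomial
open scoped Classical

noncomputable section

variable {k : Type} [Field k]

/-- Apolarity action: `apol f F = f(∂/∂y) F`, defined on monomials by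
`x^α ∘ y^β = (β!/(β-α)!) y^(β-α)` if `α ≤ β` and `0` otherwise. -/
def apol {n : ℕ} (f F : MvPolynomial (Fin n) k) : MvPolynomial (Fin n) k :=
  (AddMonoidAlgebra.coeff f).sum fun α c => (AddMonoidAlgebra.coeff F).sum fun β b =>
    if α ≤ β then
      MvPolynomial.monomial (β - α)
        (c * b * (β.prod fun i m => ((m.descFactorial (α i) : k))))
    else 0

/-- The linear form `a₀ y₀ + ⋯ + aₙ yₙ` associated to a point with coordinates `a`. -/
def dualLin {n : ℕ} (a : Fin n → k) : MvPolynomial (Fin n) k :=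
  ∑ j, MvPolynomial.C (a j) * MvPolynomial.X j

/-- Macaulay inverse system of a set of polynomials. -/
def perp {n : ℕ} (S : Set (MvPolynomial (Fin n) k)) : Set (MvPolynomial (Fin n) k) :=
  {F | ∀ g ∈ S, apol g F = 0}

/-- The `R`-submodule of `Γ` generated by `S` (as the `k`-span of the apolarity orbit). -/
def Rspan {n : ℕ} (S : Set (MvPolynomial (Fin n) k)) : Submodule k (MvPolynomial (Fin n) k) :=
  Submodule.span k {G | ∃ g, ∃ F ∈ S, G = apol g F}

/-- The homogeneous vanishing ideal of a family of points (given by affine representatives). -/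
def projIdeal {n r : ℕ} (a : Fin r → Fin n → k) : Ideal (MvPolynomial (Fin n) k) :=
  ⨅ i, ⨅ t : k, RingHom.ker (MvPolynomial.eval (t • a i))

/-- Hilbert function of `R/I`: `dim R_j − dim I_j`. -/
def HF {n : ℕ} (I : Ideal (MvPolynomial (Fin n) k)) (j : ℕ) : ℕ :=
  Module.finrank k (homogeneousSubmodule (Fin n) k j)
    - Module.finrank k
        (Submodule.restrictScalars k I ⊓ homogeneousSubmodule (Fin n) k j : Submodule k _)

/-- `s` is the socle degree: least integer with `HF I t = r` for all `t ≥ s`. -/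
def IsSocleDegree {n : ℕ} (I : Ideal (MvPolynomial (Fin n) k)) (r s : ℕ) : Prop :=
  (∀ t, s ≤ t → HF I t = r) ∧ ∀ s', (∀ t, s' ≤ t → HF I t = r) → s ≤ s'

/-- The affine representatives define distinct points of projective space. -/
def ProjDistinct {n r : ℕ} (a : Fin r → Fin n → k) : Prop :=
  (∀ i, a i ≠ 0) ∧ ∀ i j, i ≠ j → ∀ c : k, a i ≠ c • a j

/-- G-admissibility (with `F 0` playing the role of `F₁`). -/
def GAdmissible {n : ℕ} (z : MvPolynomial (Fin n) k) (F : ℕ → MvPolynomial (Fin n) k) : Prop :=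
  apol z (F 0) = 0 ∧ (∀ l, apol z (F (l + 1)) = F l) ∧
  ∀ l, (fun g => apol g (F (l + 1))) '' {g | ∀ G ∈ (Rspan {F l} : Submodule k (MvPolynomial (Fin n) k)), apol g G = 0}
      = ((Rspan {F 0} : Submodule k (MvPolynomial (Fin n) k)) : Set (MvPolynomial (Fin n) k))

/-- The family `F_t = (1/(t+u)!) Σ αᵢ Lᵢ^{t+u}`. -/
def famF {n r : ℕ} (a : Fin r → Fin n → k) (α : Fin r → k) (u t : ℕ) :
    MvPolynomial (Fin n) k :=
  (((t + u).factorial : k))⁻¹ • ∑ i, MvPolynomial.C (α i) * dualLin (a i) ^ (t + u)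

/-- `X` is arithmetically Gorenstein, tested with the linear nonzerodivisor `z`:
the inverse system of the Artinian reduction `I(X)+(z)` is cyclic. -/
def IsArithGorAt {n r : ℕ} (a : Fin r → Fin n → k) (z : MvPolynomial (Fin n) k) : Prop :=
  ∃ F, perp ((projIdeal a ⊔ Ideal.span {z} : Ideal _) : Set (MvPolynomial (Fin n) k))
    = ((Rspan {F} : Submodule k (MvPolynomial (Fin n) k)) : Set (MvPolynomial (Fin n) k))

/-- `X` is arithmetically Gorenstein (for some linear form not vanishing at any point). -/
def IsArithGor {n r : ℕ} (a : Fin r → Fin n → k) : Prop :=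
  ∃ b : Fin n → k, (∀ i, (∑ j, b j * a i j) ≠ 0) ∧ IsArithGorAt a (dualLin b)

/-!
Every `Lᵢ` has `yₙ`-coefficient `1`, so `x_n ∘ Lᵢ^m = m Lᵢ^{m-1}`; the factorials in `F_t`
absorb the factor `m`, whence `x_n ∘ F_{t+1} = F_t`, and `x_n ∘ F_1` is a nonzero multiple of
`Σ αᵢ Lᵢ^{s-1}`.

The coefficient of `y^β` in `Lᵢ^d` is the multinomial coefficient of `β` (nonzero in
characteristic zero) times `Pᵢ^β`, so `Σ αᵢ Lᵢ^d = 0` means `Σ αᵢ Pᵢ^β = 0` for all `|β| = d`,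
i.e. `Σ αᵢ g(Pᵢ) = 0` for every form `g` of degree `d`. As `HF_X(d)` is the rank of the
evaluation map `R_d → kʳ`, whose image then lies in the hyperplane `Σ αᵢ vᵢ = 0`, it is `< r`.
-/

lemma apol_X_eq_pderiv {n : ℕ} (j : Fin n) (F : MvPolynomial (Fin n) k) :
    apol (X j) F = pderiv j F := by
  have hX : AddMonoidAlgebra.coeff (X j : MvPolynomial (Fin n) k) =
      Finsupp.single (Finsupp.single j 1) 1 := rfl
  rw [apol, hX, Finsupp.sum_single_index (by simp), Finsupp.sum]
  conv_rhs => rw [F.as_sum, map_sum]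
  refine Finset.sum_congr rfl fun β _ => ?_
  rw [pderiv_monomial]
  split_ifs with h
  · have hj : j ∈ β.support :=
      Finsupp.mem_support_iff.2 (Nat.one_le_iff_ne_zero.1 (Finsupp.single_le_iff.1 h))
    rw [one_mul, Finsupp.prod, Finset.prod_eq_single_of_mem j hj fun i _ hij => by simp [hij],
      Finsupp.single_eq_same, Nat.descFactorial_one]
    rfl
  · have hj : β j = 0 := by simpa [Finsupp.single_le_iff] using h
    simp [hj]

lemma pderiv_dualLin {n : ℕ} (a : Fin n → k) (j : Fin n) :
    pderiv j (dualLin a) = C (a j) := by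
  simp [dualLin, pderiv_X, Pi.single_apply]

lemma pderiv_famF_succ [CharZero k] {n r : ℕ} {a : Fin r → Fin n → k} {j : Fin n}
    (ha : ∀ i, a i j = 1) (α : Fin r → k) (u t : ℕ) :
    pderiv j (famF a α u (t + 1)) = famF a α u t := by
  have hfac :
      ((t + u + 1).factorial : k)⁻¹ * (t + u + 1 : ℕ) = ((t + u).factorial : k)⁻¹ := by
    rw [Nat.factorial_succ, Nat.cast_mul, mul_inv, mul_comm, ← mul_assoc,
      mul_inv_cancel₀ (Nat.cast_ne_zero.2 (Nat.succ_ne_zero _)), one_mul]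
  simp only [famF, Derivation.map_smul, map_sum, pderiv_C_mul, pderiv_pow, pderiv_dualLin, ha,
    map_one, mul_one, show t + 1 + u = t + u + 1 by omega, Nat.add_sub_cancel]
  rw [← hfac, mul_smul]
  simp only [Finset.smul_sum, smul_eq_C_mul, map_natCast]
  exact Finset.sum_congr rfl fun i _ => by ring

lemma apol_X_famF_succ [CharZero k] {n r : ℕ} {a : Fin r → Fin n → k} {j : Fin n}
    (ha : ∀ i, a i j = 1) (α : Fin r → k) (u t : ℕ) :
    apol (X j) (famF a α u (t + 1)) = famF a α u t := by
  rw [apol_X_eq_pderiv, pderiv_famF_succ ha]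

lemma famF_zero_eq_zero_iff [CharZero k] {n r : ℕ} (a : Fin r → Fin n → k) (α : Fin r → k)
    (u : ℕ) : famF a α u 0 = 0 ↔ ∑ i, C (α i) * dualLin (a i) ^ u = 0 := by
  rw [famF, zero_add,
    smul_eq_zero_iff_right (inv_ne_zero (Nat.cast_ne_zero.2 u.factorial_ne_zero))]

lemma coeff_dualLin_pow {n : ℕ} (a : Fin n → k) (β : Fin n →₀ ℕ) (d : ℕ) :
    coeff β (dualLin a ^ d) =
      if β.degree = d then β.multinomial * β.prod (fun j m => a j ^ m) else 0 := by
  have : dualLin a = ∑ j, a j • X j := by simp [dualLin, smul_eq_C_mul]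
  rw [this, coeff_linearCombination_X_pow_of_fintype]
  rfl

lemma sum_mul_prod_pow_eq_zero [CharZero k] {n r d : ℕ} {a : Fin r → Fin n → k}
    {α : Fin r → k}
    (h : ∑ i, C (α i) * dualLin (a i) ^ d = 0) {β : Fin n →₀ ℕ} (hβ : β.degree = d) :
    ∑ i, α i * β.prod (fun j m => a i j ^ m) = 0 := by
  have hcoeff := congrArg (coeff β) h
  simp only [coeff_sum, coeff_C_mul, coeff_dualLin_pow, hβ, if_true, coeff_zero] at hcoeff
  have hmult : (β.multinomial : k) ≠ 0 := Nat.cast_ne_zero.2 (Nat.multinomial_pos _ _).ne'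
  refine (mul_eq_zero.1 ?_).resolve_left hmult
  rw [Finset.mul_sum, ← hcoeff]
  exact Finset.sum_congr rfl fun i _ => by ring

lemma sum_mul_eval_eq_zero [CharZero k] {n r d : ℕ} {a : Fin r → Fin n → k} {α : Fin r → k}
    (h : ∑ i, C (α i) * dualLin (a i) ^ d = 0) {g : MvPolynomial (Fin n) k}
    (hg : g.IsHomogeneous d) : ∑ i, α i * eval (a i) g = 0 := by
  simp only [eval_eq, Finset.mul_sum]
  rw [Finset.sum_comm]
  refine Finset.sum_eq_zero fun β hβ => ?_
  have hβd : β.degree = d := by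
    rw [Finsupp.degree_eq_weight_one]; exact hg (mem_support_iff.1 hβ)
  rw [← mul_zero (coeff β g), ← sum_mul_prod_pow_eq_zero h hβd, Finset.mul_sum]
  exact Finset.sum_congr rfl fun i _ => by rw [Finsupp.prod]; ring

lemma MvPolynomial.IsHomogeneous.eval_smul {σ R : Type*} [Fintype σ] [CommSemiring R]
    {φ : MvPolynomial σ R} {d : ℕ} (hφ : φ.IsHomogeneous d) (t : R) (x : σ → R) :
    eval (t • x) φ = t ^ d * eval x φ := by
  rw [eval_eq', eval_eq', Finset.mul_sum]
  refine Finset.sum_congr rfl fun β hβ => ?_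
  have hβd : ∑ i, β i = d := by
    rw [← Finsupp.degree_eq_sum, Finsupp.degree_eq_weight_one]; exact hφ (mem_support_iff.1 hβ)
  simp only [Pi.smul_apply, smul_eq_mul, mul_pow, Finset.prod_mul_distrib,
    Finset.prod_pow_eq_pow_sum, hβd]
  ring

lemma mem_projIdeal_iff_of_isHomogeneous {n r d : ℕ} {a : Fin r → Fin n → k}
    {g : MvPolynomial (Fin n) k} (hg : g.IsHomogeneous d) :
    g ∈ projIdeal a ↔ ∀ i, eval (a i) g = 0 := by
  simp only [projIdeal, Ideal.mem_iInf, RingHom.mem_ker, hg.eval_smul]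
  refine ⟨fun h i => by simpa using h i 1, fun h i t => by rw [h i, mul_zero]⟩

def homogeneousEval {n r : ℕ} (a : Fin r → Fin n → k) (d : ℕ) :
    homogeneousSubmodule (Fin n) k d →ₗ[k] Fin r → k :=
  LinearMap.pi fun i => (aeval (a i)).toLinearMap ∘ₗ (homogeneousSubmodule (Fin n) k d).subtype

lemma ker_homogeneousEval {n r : ℕ} (a : Fin r → Fin n → k) (d : ℕ) :
    LinearMap.ker (homogeneousEval a d) =
      ((projIdeal a).restrictScalars k).comap (homogeneousSubmodule (Fin n) k d).subtype := by
  ext ⟨g, hg⟩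
  simp [homogeneousEval, funext_iff, mem_projIdeal_iff_of_isHomogeneous hg]

lemma HF_projIdeal_eq_finrank_range {n r : ℕ} (a : Fin r → Fin n → k) (d : ℕ) :
    HF (projIdeal a) d = Module.finrank k (LinearMap.range (homogeneousEval a d)) := by
  have : Module.Finite k (homogeneousSubmodule (Fin n) k d) :=
    Module.Finite.iff_fg.2 (homogeneousSubmodule_fg (Fin n) k d)
  rw [HF, inf_comm, ← Submodule.map_comap_subtype, Submodule.finrank_map_subtype_eq,
    ← ker_homogeneousEval, ← LinearMap.finrank_range_add_finrank_ker (homogeneousEval a d),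
    Nat.add_sub_cancel]

lemma HF_projIdeal_lt_of_sum_pow_eq_zero [CharZero k] {n r d : ℕ} {a : Fin r → Fin n → k}
    {α : Fin r → k} (hα : α ≠ 0) (h : ∑ i, C (α i) * dualLin (a i) ^ d = 0) :
    HF (projIdeal a) d < r := by
  let φ : (Fin r → k) →ₗ[k] k := ∑ i, α i • LinearMap.proj i
  have hφ : ∀ v, φ v = ∑ i, α i * v i := fun v => by simp [φ]
  have hrange : LinearMap.range (homogeneousEval a d) ≤ LinearMap.ker φ := by
    rintro - ⟨⟨g, hg⟩, rfl⟩
    simpa [hφ, homogeneousEval] using sum_mul_eval_eq_zero h hg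
  have hker : LinearMap.ker φ ≠ ⊤ := by
    obtain ⟨i, hi⟩ := Function.ne_iff.1 hα
    intro htop
    have := hφ (Pi.single i 1)
    simp [LinearMap.ker_eq_top.1 htop, Pi.single_apply] at this
    exact hi this.symm
  calc HF (projIdeal a) d = Module.finrank k (LinearMap.range (homogeneousEval a d)) :=
        HF_projIdeal_eq_finrank_range a d
    _ ≤ Module.finrank k (LinearMap.ker φ) := Submodule.finrank_mono hrange
    _ < Module.finrank k (Fin r → k) := Submodule.finrank_lt hker
    _ = r := by simp

lemma projIdeal_of_isEmpty {n : ℕ} (a : Fin 0 → Fin n → k) : projIdeal a = ⊤ := by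
  simp [projIdeal]

lemma pos_of_isSocleDegree_projIdeal {n r s : ℕ} {a : Fin r → Fin n → k}
    (hs : IsSocleDegree (projIdeal a) r s) (hs1 : 1 ≤ s) : 0 < r := by
  rcases r with _ | r
  · have hHF : ∀ t, 0 ≤ t → HF (projIdeal a) t = 0 := fun t _ => by
      rw [HF, projIdeal_of_isEmpty, Submodule.restrictScalars_top, top_inf_eq, Nat.sub_self]
    exact absurd (hs.2 0 hHF) (by omega)
  · exact Nat.succ_pos r

theorem stmt7_general [CharZero k] (n r s : ℕ)
    (a : Fin r → Fin (n + 1) → k)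
    (hnorm : ∀ i, a i (Fin.last n) = 1)
    (hs : IsSocleDegree (projIdeal a) r s) (hs1 : 1 ≤ s)
    (α : Fin r → k) (hα : ∀ i, α i ≠ 0) :
    (∀ t, 2 ≤ t → apol (MvPolynomial.X (Fin.last n)) (famF a α (s - 1) t)
        = famF a α (s - 1) (t - 1))
    ∧ (apol (MvPolynomial.X (Fin.last n)) (famF a α (s - 1) 1) = 0
        ↔ (∑ i, MvPolynomial.C (α i) * dualLin (a i) ^ (s - 1)) = 0)
    ∧ ((∑ i, MvPolynomial.C (α i) * dualLin (a i) ^ (s - 1)) = 0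
        → HF (projIdeal a) (s - 1) < r) := by
  refine ⟨fun t ht => ?_, ?_, fun hsum => ?_⟩
  · obtain ⟨t, rfl⟩ : ∃ t', t = t' + 1 := ⟨t - 1, by omega⟩
    exact apol_X_famF_succ hnorm α (s - 1) t
  · rw [apol_X_famF_succ hnorm α (s - 1) 0, famF_zero_eq_zero_iff]
  · have hαne : α ≠ 0 := fun h0 =>
      hα ⟨0, pos_of_isSocleDegree_projIdeal hs hs1⟩ (congrFun h0 _)
    exact HF_projIdeal_lt_of_sum_pow_eq_zero hαne hsum

/-- with `u = s−1`, `x_n ∘ F_t = F_{t−1}` for `t > 1`; `x_n ∘ F_1 = 0` iff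
`Σ α_i L_i^{s−1} = 0`; and the latter forces `HF_X(s−1) < r`. -/
theorem stmt7 [CharZero k] [IsAlgClosed k] (n r s : ℕ)
    (a : Fin r → Fin (n + 1) → k) (ha : ProjDistinct a)
    (hnorm : ∀ i, a i (Fin.last n) = 1)
    (hs : IsSocleDegree (projIdeal a) r s) (hs1 : 1 ≤ s)
    (α : Fin r → k) (hα : ∀ i, α i ≠ 0) :
    (∀ t, 2 ≤ t → apol (MvPolynomial.X (Fin.last n)) (famF a α (s - 1) t)
        = famF a α (s - 1) (t - 1))
    ∧ (apol (MvPolynomial.X (Fin.last n)) (famF a α (s - 1) 1) = 0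
        ↔ (∑ i, MvPolynomial.C (α i) * dualLin (a i) ^ (s - 1)) = 0)
    ∧ ((∑ i, MvPolynomial.C (α i) * dualLin (a i) ^ (s - 1)) = 0
        → HF (projIdeal a) (s - 1) < r) :=
  stmt7_general n r s a hnorm hs hs1 α hα

end
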